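/- arXiv:math/0406157 — 2 statements merged into one kernel-verified Lean document; each statement's English description precedes it below -/
import Mathlib

section
/- Let N = n², m ≥ 1, k ≥ 1, and let Z be the number of edges of the support of a uniformly random bipartite multigraph from B'(n,m). Then E[Z^k] = (Nm/(N+m−1)) · E[(Y+1)^{k−1}], where Y is a hypergeometric random variable with parameters H(N+m−2, N−1, m−1), i.e., Pr[Y = r] = binomial(N−1, r) · binomial(m−1, m−1−r) / binomial(N+m−2, m−1). -/
open scoped Classical

/-- The finite set `B'(n,m)` of all bipartite multigraphs on the vertex set of the
complete bipartite graph `K_{n,n}` with total edge multiplicity `m`: a multigraph is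
a multiplicity function on the `n²` possible edges, which we encode as the pairs
`(i,j)` (the edge joining left-vertex `i` to right-vertex `j`). -/
def multigraphs (n m : ℕ) : Finset (Fin n × Fin n → ℕ) :=
  (Fintype.piFinset fun _ : Fin n × Fin n => Finset.range (m + 1)).filter
    fun f => ∑ e, f e = m

/-- The number of edges of the support of a multigraph, i.e. the number of edges
with positive multiplicity. -/
def suppSize {n : ℕ} (f : Fin n × Fin n → ℕ) : ℕ :=
  (Finset.univ.filter fun e => 0 < f e).card

/-!
A multigraph with total multiplicity `m` and support `A` is `1_A + g` with `g` supported on `A`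
of total `m - |A|`; by stars and bars there are `C(m-1, m-|A|)` of them, hence
`C(N, s) C(m-1, m-s)` multigraphs whose support has `s` edges. The absorption identities
`s C(N, s) = N C(N-1, s-1)` and `m C(N+m-1, m) = (N+m-1) C(N+m-2, m-1)` then turn
`∑ₛ s^k C(N, s) C(m-1, m-s) / C(N+m-1, m)` into `N m / (N+m-1)` times the hypergeometric mean
of `s^(k-1)`.
-/

open Finset

lemma card_piAntidiag_nat {ι : Type*} [DecidableEq ι] (s : Finset ι) (n : ℕ) :
    #(piAntidiag s n) = (#s + n - 1).choose n := by
  rw [← card_finsuppAntidiag_nat_eq_choose, finsuppAntidiag, card_map, card_attach]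

lemma multigraphs_eq_piAntidiag (n m : ℕ) : multigraphs n m = piAntidiag univ m := by
  ext f
  simp only [multigraphs, mem_filter, Fintype.mem_piFinset, mem_range, mem_piAntidiag, mem_univ,
    implies_true, and_true, and_iff_right_iff_imp]
  intro h e
  exact Nat.lt_succ_of_le (h ▸ single_le_sum (fun _ _ => Nat.zero_le _) (mem_univ e))

section Support

variable {ι : Type*} [Fintype ι]

lemma card_support_le_sum (f : ι → ℕ) : #({i | 0 < f i} : Finset ι) ≤ ∑ i, f i :=
  calc #({i | 0 < f i} : Finset ι) = #({i | 0 < f i} : Finset ι) • 1 := (mul_one _).symm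
    _ ≤ ∑ i ∈ {i | 0 < f i}, f i := card_nsmul_le_sum _ f 1 fun _ hi => (mem_filter.1 hi).2
    _ ≤ ∑ i, f i := sum_le_sum_of_subset (subset_univ _)

variable [DecidableEq ι]

lemma card_filter_piAntidiag_support_eq {m : ℕ} (A : Finset ι) (hA : #A ≤ m) :
    #{f ∈ piAntidiag univ m | ({i | 0 < f i} : Finset ι) = A} = (m - 1).choose (m - #A) := by
  set c : ι → ℕ := fun i => if i ∈ A then 1 else 0
  have hc : ∑ i, c i = #A := by simp [c]
  have hsupp (f : ι → ℕ) : ({i | 0 < f i} : Finset ι) = A ↔ ∀ i, 0 < f i ↔ i ∈ A := by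
    simp [Finset.ext_iff]
  have hc_le {f : ι → ℕ} (hf : ∀ i, 0 < f i ↔ i ∈ A) (i : ι) : c i ≤ f i := by
    grind
  suffices #{f ∈ piAntidiag univ m | ({i | 0 < f i} : Finset ι) = A} = #(piAntidiag A (m - #A)) by
    rw [this, card_piAntidiag_nat, Nat.add_sub_cancel' hA]
  refine card_nbij' (· - c) (· + c) (fun f hf => ?_) (fun g hg => ?_) (fun f hf => ?_)
    (fun g _ => add_tsub_cancel_right g c)
  · simp only [mem_coe, mem_filter, mem_piAntidiag, mem_univ, implies_true, and_true, hsupp,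
      Pi.sub_apply] at hf ⊢
    obtain ⟨hsum, hf⟩ := hf
    refine ⟨?_, fun i hi => ?_⟩
    · rw [sum_subset (subset_univ A) fun i _ hi => by grind,
        sum_tsub_distrib _ fun i _ => hc_le hf i, hsum, hc]
    · grind
  · simp only [mem_coe, mem_filter, mem_piAntidiag, mem_univ, implies_true, and_true, hsupp,
      Pi.add_apply] at hg ⊢
    obtain ⟨hsum, hg⟩ := hg
    refine ⟨?_, fun i => ?_⟩
    · rw [sum_add_distrib, hc,
        ← sum_subset (subset_univ A) fun i _ hi => by_contra (hi <| hg i ·), hsum,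
        Nat.sub_add_cancel hA]
    · grind
  · simp only [mem_coe, mem_filter, mem_piAntidiag, mem_univ, hsupp] at hf
    exact funext fun i => tsub_add_cancel_of_le (hc_le hf.2 i)

lemma card_filter_piAntidiag_card_support_eq {m s : ℕ} (hs : s ≤ m) :
    #{f ∈ piAntidiag univ m | #({i | 0 < f i} : Finset ι) = s} =
      (Fintype.card ι).choose s * (m - 1).choose (m - s) := by
  rw [card_eq_sum_card_fiberwise (f := fun f : ι → ℕ => ({i | 0 < f i} : Finset ι))
    (t := powersetCard s univ) fun f hf => mem_powersetCard_univ.2 (mem_filter.1 hf).2,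
    sum_congr rfl fun A hA => ?_, sum_const, card_powersetCard, card_univ, smul_eq_mul]
  rw [mem_powersetCard_univ] at hA
  rw [filter_filter, ← hA, ← card_filter_piAntidiag_support_eq A (by omega)]
  congr 1
  exact filter_congr fun f _ => ⟨And.right, fun h => ⟨congrArg card h, h⟩⟩

lemma sum_piAntidiag_card_support {M : Type*} [AddCommMonoid M] {m : ℕ} (hm : 1 ≤ m)
    (g : ℕ → M) :
    ∑ f ∈ piAntidiag univ m, g #({i | 0 < f i} : Finset ι) =
      ∑ r ∈ range m,
        ((Fintype.card ι).choose (r + 1) * (m - 1).choose (m - 1 - r)) • g (r + 1) := by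
  have hmaps (f) (hf : f ∈ piAntidiag (univ : Finset ι) m) :
      #({i | 0 < f i} : Finset ι) ∈ Ico 1 (m + 1) := by
    rw [mem_piAntidiag] at hf
    obtain ⟨i, -, hi⟩ := exists_ne_zero_of_sum_ne_zero (hf.1.trans_ne (by omega))
    refine mem_Ico.2 ⟨card_pos.2 ⟨i, ?_⟩, Nat.lt_succ_of_le (hf.1 ▸ card_support_le_sum f)⟩
    simpa [Nat.pos_iff_ne_zero] using hi
  rw [← sum_fiberwise_of_maps_to hmaps, sum_Ico_eq_sum_range, Nat.add_sub_cancel]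
  refine sum_congr rfl fun r hr => ?_
  rw [sum_congr rfl fun f hf => by rw [(mem_filter.1 hf).2], sum_const,
    card_filter_piAntidiag_card_support_eq (by rw [mem_range] at hr; omega), Nat.sub_sub,
    add_comm 1 r]

end Support

lemma sum_choose_mul_choose_mul_pow_div_choose (N m k : ℕ) (hm : 1 ≤ m) (hk : 1 ≤ k) :
    (∑ r ∈ range m,
        (N.choose (r + 1) : ℝ) * ((m - 1).choose (m - 1 - r) : ℝ) * ((r : ℝ) + 1) ^ k) /
        ((N + m - 1).choose m : ℝ) =
      (N : ℝ) * m / ((N : ℝ) + m - 1) * ∑ r ∈ range m, ((r : ℝ) + 1) ^ (k - 1) *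
        (((N - 1).choose r : ℝ) * ((m - 1).choose (m - 1 - r) : ℝ) /
          ((N + m - 2).choose (m - 1) : ℝ)) := by
  rcases N with _ | N
  · simp
  obtain ⟨m, rfl⟩ := Nat.exists_eq_add_one.2 hm
  obtain ⟨k, rfl⟩ := Nat.exists_eq_add_one.2 hk
  have hnum (r : ℕ) : ((N + 1).choose (r + 1) : ℝ) * (r + 1) = (N + 1) * N.choose r := by
    exact_mod_cast (Nat.add_one_mul_choose_eq N r).symm
  have hden : ((N + m + 1).choose (m + 1) : ℝ) = (N + m + 1) * (N + m).choose m / (m + 1) := by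
    rw [eq_div_iff (by positivity)]
    exact_mod_cast (Nat.add_one_mul_choose_eq (N + m) m).symm
  have hchoose : ((N + m).choose m : ℝ) ≠ 0 := Nat.cast_ne_zero.2 (Nat.choose_pos (by omega)).ne'
  simp only [Nat.add_sub_cancel, show N + 1 + (m + 1) - 1 = N + m + 1 by omega,
    show N + 1 + (m + 1) - 2 = N + m by omega]
  rw [hden, sum_div, mul_sum]
  refine sum_congr rfl fun r _ => ?_
  push_cast
  rw [show (N : ℝ) + 1 + (m + 1) - 1 = N + m + 1 by ring]
  field_simp
  rw [pow_succ]
  linear_combination (m.choose (m - r) : ℝ) * (r + 1) ^ k * hnum r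

/-- The `k`-th moment of the support size of a uniformly random bipartite multigraph
from `B'(n,m)` satisfies `E[Z^k] = (Nm/(N+m−1))·E[(Y+1)^{k−1}]`, where `N = n²` and
`Y` is hypergeometric with parameters `H(N+m−2, N−1, m−1)`, i.e.
`Pr[Y = r] = C(N−1,r)·C(m−1,m−1−r)/C(N+m−2,m−1)`. -/
theorem moment_suppSize (n m k : ℕ) (hm : 1 ≤ m) (hk : 1 ≤ k) :
    (∑ f ∈ multigraphs n m, (suppSize f : ℝ) ^ k) / ((multigraphs n m).card : ℝ) =
      ((n : ℝ) ^ 2 * (m : ℝ)) / ((n : ℝ) ^ 2 + (m : ℝ) - 1) *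
        ∑ r ∈ Finset.range m, ((r : ℝ) + 1) ^ (k - 1) *
          ((((n ^ 2 - 1).choose r : ℝ) * ((m - 1).choose (m - 1 - r) : ℝ)) /
            ((n ^ 2 + m - 2).choose (m - 1) : ℝ)) := by
  have hN : Fintype.card (Fin n × Fin n) = n ^ 2 := by simp [sq]
  have hcard : #(multigraphs n m) = (n ^ 2 + m - 1).choose m := by
    rw [multigraphs_eq_piAntidiag, card_piAntidiag_nat, card_univ, hN]
  have hsum : ∑ f ∈ multigraphs n m, (suppSize f : ℝ) ^ k = ∑ r ∈ range m,
      ((n ^ 2).choose (r + 1) : ℝ) * ((m - 1).choose (m - 1 - r) : ℝ) * ((r : ℝ) + 1) ^ k := by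
    rw [multigraphs_eq_piAntidiag]
    simpa [hN, nsmul_eq_mul, suppSize] using
      sum_piAntidiag_card_support (ι := Fin n × Fin n) hm fun s => (s : ℝ) ^ k
  rw [hsum, hcard, sum_choose_mul_choose_mul_pow_div_choose _ _ _ hm hk, Nat.cast_pow]
end

section
/- Let N = n², let m = m(n) be a sequence with m(n) → ∞ and m(n)/N → 0, set q = N/(N+m−1), and let Z = Z(n) be the number of edges of the support of a uniformly random bipartite multigraph from B'(n,m). Then Z = mq + o_p(mq); that is, for every ε > 0, Pr[|Z − mq| > ε·mq] → 0 as n → ∞. -/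
/-!
The mean of `Z` over `B'(n,m)` is exactly `mq`: double counting pairs (multigraph, edge of its
support) through the bijection `g ↦ g + 𝟙_e` from `B'(n,m-1)` onto the multigraphs of
`B'(n,m)` containing `e` gives `∑ Z = N·|B'(n,m-1)|`, and the same bijection gives
`m·|B'(n,m)| = (N+m-1)·|B'(n,m-1)|`. Since `Z ≤ m` always and `m - mq ≤ ε·mq` as soon as
`m - 1 ≤ εN`, only a downward deviation is possible, and Markov's inequality for the
nonnegative variable `m - Z`, whose mean is `m(1-q)`, bounds its probability by `m/(εN)`.
-/

open scoped Classical

open Finset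

/-- Markov's inequality for the uniform distribution on `s`. -/
lemma card_filter_mul_le_sum {α R : Type*} [Semiring R] [PartialOrder R] [IsOrderedRing R]
    (s : Finset α) (p : α → Prop) [DecidablePred p] (X : α → R) (t : R) (hpX : ∀ x ∈ s, p x → t ≤ X x) (hX : ∀ x ∈ s, 0 ≤ X x) :
    #(s.filter p) * t ≤ ∑ x ∈ s, X x :=
  calc #(s.filter p) * t ≤ ∑ x ∈ s.filter p, X x := by
        simpa [nsmul_eq_mul] using card_nsmul_le_sum _ X t fun x hx =>
          hpX x (mem_filter.mp hx).1 (mem_filter.mp hx).2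
    _ ≤ ∑ x ∈ s, X x :=
        sum_le_sum_of_subset_of_nonneg (filter_subset _ _) fun x hx _ => hX x hx

section Multigraphs

variable {n m : ℕ}

lemma mem_multigraphs {f : Fin n × Fin n → ℕ} : f ∈ multigraphs n m ↔ ∑ e, f e = m := by
  refine ⟨fun h => (mem_filter.mp h).2, fun h => mem_filter.mpr ⟨?_, h⟩⟩
  refine Fintype.mem_piFinset.mpr fun e => ?_
  rw [mem_range, Nat.lt_succ_iff, ← h]
  exact single_le_sum (fun _ _ => Nat.zero_le _) (mem_univ e)

lemma suppSize_le_sum (f : Fin n × Fin n → ℕ) : suppSize f ≤ ∑ e, f e :=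
  calc suppSize f = ∑ _e ∈ univ.filter (fun e => 0 < f e), 1 := card_eq_sum_ones _
    _ ≤ ∑ e ∈ univ.filter (fun e => 0 < f e), f e :=
        sum_le_sum fun _ he => (mem_filter.mp he).2
    _ ≤ ∑ e, f e := sum_le_sum_of_subset (filter_subset _ _)

lemma suppSize_le_of_mem_multigraphs {f : Fin n × Fin n → ℕ} (hf : f ∈ multigraphs n m) :
    suppSize f ≤ m :=
  mem_multigraphs.mp hf ▸ suppSize_le_sum f

lemma sum_add_single_one (f : Fin n × Fin n → ℕ) (e : Fin n × Fin n) :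
    ∑ x, (f + Pi.single e 1 : Fin n × Fin n → ℕ) x = ∑ x, f x + 1 := by
  simp [sum_add_distrib]

lemma sum_filter_pos_multigraphs_succ {M : Type*} [AddCommMonoid M] (e : Fin n × Fin n)
    (F : (Fin n × Fin n → ℕ) → M) :
    ∑ f ∈ (multigraphs n (m + 1)).filter (fun f => 0 < f e), F f
      = ∑ g ∈ multigraphs n m, F (g + Pi.single e 1) := by
  have sub_add_single {f : Fin n × Fin n → ℕ} (hf : 0 < f e) :
      f - Pi.single e 1 + Pi.single e 1 = f := by
    funext x
    rcases eq_or_ne x e with rfl | hx <;> simp [*]; omega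
  symm
  refine sum_nbij' (fun g => g + Pi.single e 1) (fun f => f - Pi.single e 1) ?_ ?_ ?_ ?_
    (fun _ _ => rfl)
  · intro g hg
    simp only [mem_filter, mem_multigraphs] at hg ⊢
    exact ⟨by rw [sum_add_single_one, hg], by simp⟩
  · intro f hf
    simp only [mem_filter, mem_multigraphs] at hf ⊢
    have := sum_add_single_one (f - Pi.single e 1) e
    rw [sub_add_single hf.2, hf.1] at this
    omega
  · intro g _
    funext x
    simp
  · intro f hf
    exact sub_add_single (mem_filter.mp hf).2

lemma succ_mul_card_multigraphs_succ :
    (m + 1) * #(multigraphs n (m + 1)) = (n ^ 2 + m) * #(multigraphs n m) := by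
  have sum_mult (e : Fin n × Fin n) :
      ∑ f ∈ multigraphs n (m + 1), f e = ∑ g ∈ multigraphs n m, g e + #(multigraphs n m) := by
    have drop_zeros : ∑ f ∈ (multigraphs n (m + 1)).filter (fun f => 0 < f e), f e
        = ∑ f ∈ multigraphs n (m + 1), f e :=
      sum_filter_of_ne fun f _ h => Nat.pos_of_ne_zero h
    rw [← drop_zeros, sum_filter_pos_multigraphs_succ e (fun f => f e)]
    simp [sum_add_distrib]
  have sum_total (k : ℕ) : ∑ f ∈ multigraphs n k, ∑ e, f e = k * #(multigraphs n k) := by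
    rw [sum_congr rfl fun f hf => mem_multigraphs.mp hf, sum_const, smul_eq_mul, mul_comm]
  calc (m + 1) * #(multigraphs n (m + 1))
      = ∑ e : Fin n × Fin n, ∑ f ∈ multigraphs n (m + 1), f e := by
        rw [← sum_total, sum_comm]
    _ = ∑ f ∈ multigraphs n m, ∑ e, f e + n ^ 2 * #(multigraphs n m) := by
        simp [sum_congr rfl fun e _ => sum_mult e, sum_add_distrib, sum_comm (s := univ), sq]
    _ = (n ^ 2 + m) * #(multigraphs n m) := by rw [sum_total]; ring

lemma sum_suppSize_multigraphs_succ :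
    ∑ f ∈ multigraphs n (m + 1), suppSize f = n ^ 2 * #(multigraphs n m) :=
  calc ∑ f ∈ multigraphs n (m + 1), suppSize f
      = ∑ e : Fin n × Fin n, #((multigraphs n (m + 1)).filter fun f => 0 < f e) := by
        simp only [suppSize, card_filter]
        exact sum_comm
    _ = ∑ _e : Fin n × Fin n, #(multigraphs n m) := by
        simp only [card_eq_sum_ones, sum_filter_pos_multigraphs_succ _ fun _ => 1]
    _ = n ^ 2 * #(multigraphs n m) := by simp [sq]

/-- The paper's `mq`, where `q = N/(N+m-1)` and `N = n²`. -/
noncomputable def meanSuppSize (n m : ℕ) : ℝ :=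
  (m : ℝ) * ((n : ℝ) ^ 2 / ((n : ℝ) ^ 2 + (m : ℝ) - 1))

theorem sum_suppSize_multigraphs :
    ∑ f ∈ multigraphs n m, (suppSize f : ℝ) = meanSuppSize n m * #(multigraphs n m) := by
  rcases m with _ | k
  · simp only [meanSuppSize, CharP.cast_eq_zero, zero_mul]
    exact sum_eq_zero fun f hf => by simpa using suppSize_le_of_mem_multigraphs hf
  have hcard : ((k : ℝ) + 1) * #(multigraphs n (k + 1))
      = ((n : ℝ) ^ 2 + k) * #(multigraphs n k) := by
    exact_mod_cast succ_mul_card_multigraphs_succ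
  have hsum : ∑ f ∈ multigraphs n (k + 1), (suppSize f : ℝ)
      = (n : ℝ) ^ 2 * #(multigraphs n k) := by
    exact_mod_cast sum_suppSize_multigraphs_succ
  have hden : (n : ℝ) ^ 2 + ((k + 1 : ℕ) : ℝ) - 1 = (n : ℝ) ^ 2 + k := by push_cast; ring
  rw [hsum, meanSuppSize, hden]
  push_cast
  -- `N + m - 1 = 0` only for `n = 0, m = 1`, where `x / 0 = 0` makes both sides vanish.
  rcases eq_or_ne ((n : ℝ) ^ 2 + k) 0 with h0 | h0
  · have hn : (n : ℝ) ^ 2 = 0 := by linarith [sq_nonneg (n : ℝ), (k.cast_nonneg : (0 : ℝ) ≤ k)]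
    simp [hn]
  · field_simp
    linear_combination -(n : ℝ) ^ 2 * hcard

lemma meanSuppSize_eq_div : meanSuppSize n m = m * n ^ 2 / ((n : ℝ) ^ 2 + m - 1) :=
  (mul_div_assoc _ _ _).symm

lemma sq_add_sub_one_pos (hn : 0 < n) (hm : 0 < m) : (0 : ℝ) < (n : ℝ) ^ 2 + m - 1 := by
  have : (1 : ℝ) ≤ m := by exact_mod_cast hm
  have : (0 : ℝ) < (n : ℝ) ^ 2 := by positivity
  linarith

lemma sub_meanSuppSize_eq (hn : 0 < n) (hm : 0 < m) :
    (m : ℝ) - meanSuppSize n m = m * (m - 1) / ((n : ℝ) ^ 2 + m - 1) := by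
  have := sq_add_sub_one_pos hn hm
  rw [meanSuppSize_eq_div]
  field_simp
  ring

lemma card_filter_deviation_mul_le {ε : ℝ} (hμ : meanSuppSize n m ≤ m)
    (hdev : (m : ℝ) - meanSuppSize n m ≤ ε * meanSuppSize n m) :
    #((multigraphs n m).filter fun f =>
        ε * meanSuppSize n m < |(suppSize f : ℝ) - meanSuppSize n m|) * (ε * meanSuppSize n m)
      ≤ (m - meanSuppSize n m) * #(multigraphs n m) := by
  have hZ (f) (hf : f ∈ multigraphs n m) : (suppSize f : ℝ) ≤ m := by
    exact_mod_cast suppSize_le_of_mem_multigraphs hf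
  calc _ ≤ ∑ f ∈ multigraphs n m, ((m : ℝ) - suppSize f) := by
        refine card_filter_mul_le_sum _ _ _ _ (fun f hf hbad => ?_) fun f hf => by
          linarith [hZ f hf]
        rcases lt_abs.mp hbad with h | h <;> linarith [hZ f hf]
    _ = (m - meanSuppSize n m) * #(multigraphs n m) := by
        rw [sum_sub_distrib, sum_suppSize_multigraphs]
        simp only [sum_const, nsmul_eq_mul]
        ring

theorem card_filter_deviation_div_card_le {ε : ℝ} (hn : 0 < n) (hε : 0 < ε)
    (hm : (m : ℝ) - 1 ≤ ε * n ^ 2) :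
    (#((multigraphs n m).filter fun f =>
        ε * meanSuppSize n m < |(suppSize f : ℝ) - meanSuppSize n m|) : ℝ) / #(multigraphs n m)
      ≤ ε⁻¹ * (m / n ^ 2) := by
  rcases Nat.eq_zero_or_pos m with rfl | hm0
  · rw [filter_false_of_mem fun f hf => ?_]
    · simp
    have := suppSize_le_of_mem_multigraphs hf
    simp_all [meanSuppSize]
  have hD := sq_add_sub_one_pos hn hm0
  have hμ : 0 < meanSuppSize n m := by rw [meanSuppSize_eq_div]; positivity
  have hgap := sub_meanSuppSize_eq hn hm0
  have hM : (1 : ℝ) ≤ m := by exact_mod_cast hm0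
  have hμle : meanSuppSize n m ≤ m := by
    rw [← sub_nonneg, hgap]
    have : (0 : ℝ) ≤ m - 1 := by linarith
    positivity
  have hdev : (m : ℝ) - meanSuppSize n m ≤ ε * meanSuppSize n m := by
    rw [hgap, meanSuppSize_eq_div, mul_div_assoc']
    refine div_le_div_of_nonneg_right ?_ hD.le
    nlinarith
  refine div_le_of_le_mul₀ (by positivity) (by positivity) ?_
  refine le_of_mul_le_mul_right ?_ (mul_pos hε hμ)
  calc _ ≤ (m - meanSuppSize n m) * #(multigraphs n m) := card_filter_deviation_mul_le hμle hdev
    _ ≤ ε⁻¹ * (m / n ^ 2) * #(multigraphs n m) * (ε * meanSuppSize n m) := by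
        rw [hgap, meanSuppSize_eq_div]
        field_simp
        gcongr
        linarith

end Multigraphs

theorem suppSize_eq_mq_plus_op_general (m : ℕ → ℕ)
    (hm2 : Filter.Tendsto (fun n => (m n : ℝ) / (n : ℝ) ^ 2) Filter.atTop (nhds 0))
    (ε : ℝ) (hε : 0 < ε) :
    Filter.Tendsto
      (fun n =>
        (((multigraphs n (m n)).filter fun f =>
            ε * ((m n : ℝ) * ((n : ℝ) ^ 2 / ((n : ℝ) ^ 2 + (m n : ℝ) - 1))) <
              |(suppSize f : ℝ) -
                (m n : ℝ) * ((n : ℝ) ^ 2 / ((n : ℝ) ^ 2 + (m n : ℝ) - 1))|).card : ℝ) /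
          ((multigraphs n (m n)).card : ℝ))
      Filter.atTop (nhds 0) := by
  have hbound : Filter.Tendsto (fun n => ε⁻¹ * ((m n : ℝ) / (n : ℝ) ^ 2))
      Filter.atTop (nhds 0) := by
    simpa using hm2.const_mul ε⁻¹
  refine squeeze_zero' (Filter.Eventually.of_forall fun n => by positivity) ?_ hbound
  filter_upwards [Filter.eventually_gt_atTop 0, hm2.eventually (gt_mem_nhds hε)] with n hn hsmall
  refine card_filter_deviation_div_card_le hn hε ?_
  have := (div_lt_iff₀ (by positivity)).mp hsmall
  linarith

/-- If `m = m(n) → ∞` and `m/N → 0` where `N = n²`, and `q = N/(N+m−1)`, then the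
support size `Z` of a uniformly random bipartite multigraph from `B'(n,m)` satisfies
`Z = mq + o_p(mq)`: for every `ε > 0`, `Pr[|Z − mq| > ε·mq] → 0` as `n → ∞`. -/
theorem suppSize_eq_mq_plus_op (m : ℕ → ℕ)
    (hm1 : Filter.Tendsto m Filter.atTop Filter.atTop)
    (hm2 : Filter.Tendsto (fun n => (m n : ℝ) / (n : ℝ) ^ 2) Filter.atTop (nhds 0))
    (ε : ℝ) (hε : 0 < ε) :
    Filter.Tendsto
      (fun n =>
        (((multigraphs n (m n)).filter fun f =>
            ε * ((m n : ℝ) * ((n : ℝ) ^ 2 / ((n : ℝ) ^ 2 + (m n : ℝ) - 1))) <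
              |(suppSize f : ℝ) -
                (m n : ℝ) * ((n : ℝ) ^ 2 / ((n : ℝ) ^ 2 + (m n : ℝ) - 1))|).card : ℝ) /
          ((multigraphs n (m n)).card : ℝ))
      Filter.atTop (nhds 0) :=
  suppSize_eq_mq_plus_op_general m hm2 ε hε
end
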